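/- arXiv:1904.05030 — 2 statements merged into one kernel-verified Lean document; each statement's English description precedes it below -/
import Mathlib

section
/- For i.i.d. random matrices A_k and the recursion x_{k+1} = A_k x_k with deterministic x_0, exponential second-moment stability holds if and only if there exist a symmetric positive definite P and λ ∈ (0,1) such that λ² P − E[A_0^T P A_0] ≥ 0 in the positive semidefinite order. -/
open MeasureTheory ProbabilityTheory Matrix

/-- Matrices carry the product measurable structure (entrywise). -/
instance matrixMeasurableSpace {m n α : Type*} [MeasurableSpace α] :
    MeasurableSpace (Matrix m n α) :=
  inferInstanceAs (MeasurableSpace (m → n → α))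

/-!
Write `T P = E[A₀ᵀ P A₀]`. Since `A_k` is independent of `Φ_k = A_{k-1} ⋯ A₀` and distributed
like `A₀`, `E[Φ_kᵀ W Φ_k] = Tᵏ W`; in particular `E‖Φ_k x‖² = xᵀ (Tᵏ 1) x`, so stability says
`Tᵏ 1 ≤ a² λ²ᵏ • 1` in the Loewner order, for which `T` is linear and monotone.
A Lyapunov inequality `T P ≤ λ² P` iterates to `Tᵏ P ≤ λ²ᵏ P`, and `c • 1 ≤ P ≤ C • 1` transfers
this to `Tᵏ 1`. Conversely, for `N` large the truncated series `P = ∑_{k ≤ N} λ⁻ᵏ Tᵏ 1` satisfies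
`T P ≤ λ P`, a Lyapunov inequality with rate `√λ`.
-/

open scoped MatrixOrder

section OrderedModule

variable {E : Type*} [AddCommGroup E] [PartialOrder E] [Module ℝ E] {T : Module.End ℝ E}

lemma Module.End.monotone_pow (hT : Monotone T) (k : ℕ) : Monotone (T ^ k) := by
  rw [Module.End.coe_pow]; exact hT.iterate k

variable [IsOrderedModule ℝ E]

lemma Monotone.pow_apply_le_pow_smul (hT : Monotone T) {P : E} {ρ : ℝ} (hρ : 0 ≤ ρ)
    (hP : T P ≤ ρ • P) (k : ℕ) : (T ^ k) P ≤ ρ ^ k • P := by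
  induction k with
  | zero => simp
  | succ k ih =>
    calc (T ^ (k + 1)) P = (T ^ k) (T P) := by rw [pow_succ, Module.End.mul_apply]
      _ ≤ (T ^ k) (ρ • P) := Module.End.monotone_pow hT k hP
      _ = ρ • (T ^ k) P := map_smul _ _ _
      _ ≤ ρ • ρ ^ k • P := smul_le_smul_of_nonneg_left ih hρ
      _ = ρ ^ (k + 1) • P := by rw [smul_smul, pow_succ']

lemma Monotone.pow_apply_le_of_map_le_smul (hT : Monotone T) {e P : E} {c C ρ : ℝ} (hc : 0 < c)
    (hρ : 0 ≤ ρ) (hlow : c • e ≤ P) (hup : P ≤ C • e) (hP : T P ≤ ρ • P) (k : ℕ) :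
    (T ^ k) e ≤ (C / c * ρ ^ k) • e := by
  rw [← smul_le_smul_iff_of_pos_left hc, ← map_smul]
  calc (T ^ k) (c • e) ≤ (T ^ k) P := Module.End.monotone_pow hT k hlow
    _ ≤ ρ ^ k • P := hT.pow_apply_le_pow_smul hρ hP k
    _ ≤ ρ ^ k • C • e := smul_le_smul_of_nonneg_left hup (pow_nonneg hρ k)
    _ = c • (C / c * ρ ^ k) • e := by rw [smul_smul, smul_smul]; congr 1; field_simp

/-- The Lyapunov element is the truncated series `P = ∑_{k ≤ N} σ⁻ᵏ Tᵏ e`: applying `T` shifts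
it, so that `T P = σ (P - e + σ^{-(N+1)} T^{N+1} e)`, and the last term is at most `e` once
`C σ^{N+1} ≤ 1`. -/
lemma Monotone.exists_le_map_le_smul [IsOrderedAddMonoid E] (hT : Monotone T) {e : E}
    (he : 0 ≤ e) {C σ : ℝ} (hσ : σ ∈ Set.Ioo 0 1) (h : ∀ k, (T ^ k) e ≤ (C * σ ^ (2 * k)) • e) :
    ∃ P, e ≤ P ∧ T P ≤ σ • P := by
  obtain ⟨hσ0, hσ1⟩ := hσ
  obtain ⟨N, hN⟩ : ∃ N, C * σ ^ (N + 1) ≤ 1 := by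
    have := (tendsto_pow_atTop_nhds_zero_of_lt_one hσ0.le hσ1).const_mul C
    rw [mul_zero] at this
    obtain ⟨N, hN⟩ := Filter.eventually_atTop.1 (this.eventually (ge_mem_nhds zero_lt_one))
    exact ⟨N, hN (N + 1) N.le_succ⟩
  set f : ℕ → E := fun k => σ⁻¹ ^ k • (T ^ k) e with hf
  have hf0 : f 0 = e := by simp [hf]
  set P := ∑ k ∈ Finset.range (N + 1), f k
  have hfN : f (N + 1) ≤ e :=
    calc f (N + 1) ≤ σ⁻¹ ^ (N + 1) • (C * σ ^ (2 * (N + 1))) • e :=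
          smul_le_smul_of_nonneg_left (h _) (by positivity)
      _ = (C * σ ^ (N + 1)) • e := by
          rw [smul_smul]; congr 1; rw [pow_mul', sq, inv_pow]; field_simp
      _ ≤ (1 : ℝ) • e := smul_le_smul_of_nonneg_right hN he
      _ = e := one_smul _ _
  have hshift : T P = σ • (P + f (N + 1) - e) := by
    have htel := (Finset.sum_range_succ' f (N + 1)).symm.trans (Finset.sum_range_succ f (N + 1))
    rw [hf0, ← eq_sub_iff_add_eq] at htel
    have hTf : ∀ k, T (f k) = σ • f (k + 1) := fun k => by
      simp only [hf, map_smul, ← Module.End.mul_apply, ← pow_succ', smul_smul]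
      congr 1; rw [pow_succ]; field_simp
    simp only [P, map_sum, hTf, ← Finset.smul_sum, htel]
  refine ⟨P, ?_, ?_⟩
  · change e ≤ ∑ k ∈ Finset.range (N + 1), f k
    rw [Finset.sum_range_succ', hf0, le_add_iff_nonneg_left]
    exact Finset.sum_nonneg fun k _ =>
      smul_nonneg (by positivity) (by simpa using Module.End.monotone_pow hT (k + 1) he)
  · rw [hshift]
    refine smul_le_smul_of_nonneg_left ?_ hσ0.le
    calc P + f (N + 1) - e ≤ P + e - e := sub_le_sub_right (add_le_add_right hfN P) e
      _ = P := add_sub_cancel_right P e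

end OrderedModule

section LoewnerBounds

variable {ι : Type*} [Fintype ι] [DecidableEq ι]

lemma Matrix.PosDef.exists_pos_smul_one_le {P : Matrix ι ι ℝ} (hP : P.PosDef) :
    ∃ c > (0 : ℝ), c • (1 : Matrix ι ι ℝ) ≤ P := by
  cases subsingleton_or_nontrivial (Matrix ι ι ℝ) with
  | inl h => exact ⟨1, one_pos, (Subsingleton.elim _ _ : (1 : ℝ) • (1 : Matrix ι ι ℝ) = P).le⟩
  | inr h =>
    simp_rw [← Algebra.algebraMap_eq_smul_one]
    exact (CFC.exists_pos_algebraMap_le_iff hP.isHermitian.isSelfAdjoint).2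
      fun x hx => hP.isStrictlyPositive.spectrum_pos hx

lemma Matrix.IsHermitian.exists_pos_le_smul_one {P : Matrix ι ι ℝ} (hP : P.IsHermitian) :
    ∃ C > (0 : ℝ), P ≤ C • (1 : Matrix ι ι ℝ) := by
  obtain ⟨r, hr⟩ := (finite_real_spectrum (A := P)).bddAbove
  refine ⟨max r 1, by positivity, ?_⟩
  rw [← Algebra.algebraMap_eq_smul_one]
  exact le_algebraMap_of_spectrum_le (fun x hx => (hr hx).trans (le_max_left r 1)) hP.isSelfAdjoint

lemma Matrix.IsHermitian.le_smul_one_iff {M : Matrix ι ι ℝ} (hM : M.IsHermitian) (r : ℝ) :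
    M ≤ r • (1 : Matrix ι ι ℝ) ↔ ∀ x, x ⬝ᵥ M *ᵥ x ≤ r * ∑ i, x i ^ 2 := by
  rw [le_iff, posSemidef_iff_dotProduct_mulVec,
    and_iff_right ((isHermitian_one.smul (IsSelfAdjoint.all r)).sub hM)]
  refine forall_congr' fun x => ?_
  rw [star_trivial, sub_mulVec, dotProduct_sub, smul_mulVec, one_mulVec, dotProduct_smul,
    smul_eq_mul, sub_nonneg]
  simp only [dotProduct, sq]

end LoewnerBounds

lemma Matrix.transpose_mul_mul_apply {l m R : Type*} [Fintype l] [CommSemiring R]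
    (X : Matrix l m R) (W : Matrix l l R) (i j : m) :
    (Xᵀ * W * X) i j = ∑ p, ∑ q, W p q * (X p i * X q j) := by
  simp only [mul_apply, transpose_apply, Finset.sum_mul]
  rw [Finset.sum_comm]
  exact Finset.sum_congr rfl fun p _ => Finset.sum_congr rfl fun q _ => by ring

lemma Measurable.matrix_mul {α l m o : Type*} [Fintype m] {_ : MeasurableSpace α}
    {f : α → Matrix l m ℝ} {g : α → Matrix m o ℝ} (hf : Measurable f) (hg : Measurable g) :
    Measurable fun a => f a * g a := by
  refine measurable_pi_lambda _ fun i => measurable_pi_lambda _ fun j => ?_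
  simp only [mul_apply]
  fun_prop

lemma sqrt_le_mul_sqrt_mul_pow_iff {E S a lam : ℝ} (hS : 0 ≤ S) (ha : 0 ≤ a) (hlam : 0 ≤ lam)
    (k : ℕ) : √E ≤ a * √S * lam ^ k ↔ E ≤ a ^ 2 * lam ^ (2 * k) * S := by
  have h : a * √S * lam ^ k = √(a ^ 2 * lam ^ (2 * k) * S) := by
    rw [Real.sqrt_mul' _ hS, show a ^ 2 * lam ^ (2 * k) = (a * lam ^ k) ^ 2 by ring,
      Real.sqrt_sq (by positivity)]
    ring
  rw [h, Real.sqrt_le_sqrt_iff (by positivity)]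

section Integral

variable {Ω : Type*} [MeasurableSpace Ω] {μ : Measure Ω}

lemma ProbabilityTheory.IndepFun.memLp_two_mul {f g : Ω → ℝ} (h : IndepFun f g μ)
    (hf : MemLp f 2 μ) (hg : MemLp g 2 μ) : MemLp (f * g) 2 μ := by
  rw [memLp_two_iff_integrable_sq (hf.aestronglyMeasurable.mul hg.aestronglyMeasurable)]
  refine ((h.comp (measurable_id.pow_const 2) (measurable_id.pow_const 2)).integrable_mul
    hf.integrable_sq hg.integrable_sq).congr (ae_of_all _ fun ω => ?_)
  simp [mul_pow]

variable {m : Type*} [Fintype m]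

lemma dotProduct_of_integral_mulVec {F : Ω → Matrix m m ℝ}
    (hF : ∀ i j, Integrable (fun ω => F ω i j) μ) (x : m → ℝ) :
    x ⬝ᵥ (Matrix.of fun i j => ∫ ω, F ω i j ∂μ) *ᵥ x = ∫ ω, x ⬝ᵥ F ω *ᵥ x ∂μ := by
  simp only [dotProduct, mulVec, of_apply, Finset.mul_sum]
  rw [integral_finsetSum _ fun i _ => integrable_finsetSum _ fun j _ =>
    ((hF i j).mul_const _).const_mul _]
  refine Finset.sum_congr rfl fun i _ => ?_
  rw [integral_finsetSum _ fun j _ => ((hF i j).mul_const _).const_mul _]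
  exact Finset.sum_congr rfl fun j _ => by rw [integral_const_mul, integral_mul_const]

lemma posSemidef_of_integral {F : Ω → Matrix m m ℝ}
    (hF : ∀ i j, Integrable (fun ω => F ω i j) μ) (hpsd : ∀ ω, (F ω).PosSemidef) :
    (Matrix.of fun i j => ∫ ω, F ω i j ∂μ).PosSemidef := by
  refine .of_dotProduct_mulVec_nonneg ?_ fun x => ?_
  · ext i j
    simp only [conjTranspose_apply, of_apply, star_trivial]
    exact integral_congr_ae (ae_of_all _ fun ω => (hpsd ω).isHermitian.apply i j)
  · rw [star_trivial, dotProduct_of_integral_mulVec hF]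
    exact integral_nonneg fun ω => by simpa using (hpsd ω).dotProduct_mulVec_nonneg x

end Integral

section ExpectConj

variable {Ω : Type*} [MeasurableSpace Ω] {μ : Measure Ω} {l m : Type*} [Fintype l]

noncomputable def expectConj (μ : Measure Ω) (X : Ω → Matrix l m ℝ) (W : Matrix l l ℝ) :
    Matrix m m ℝ :=
  Matrix.of fun i j => ∫ ω, ((X ω)ᵀ * W * X ω) i j ∂μ

lemma integrable_transpose_mul_mul_apply {X : Ω → Matrix l m ℝ}
    (hX : ∀ i j, MemLp (fun ω => X ω i j) 2 μ) (W : Matrix l l ℝ) (i j : m) :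
    Integrable (fun ω => ((X ω)ᵀ * W * X ω) i j) μ := by
  simp_rw [transpose_mul_mul_apply]
  exact integrable_finsetSum _ fun p _ => integrable_finsetSum _ fun q _ =>
    ((hX p i).integrable_mul (hX q j)).const_mul _

noncomputable def expectConjₗ {X : Ω → Matrix l m ℝ} (hX : ∀ i j, MemLp (fun ω => X ω i j) 2 μ) :
    Matrix l l ℝ →ₗ[ℝ] Matrix m m ℝ where
  toFun := expectConj μ X
  map_add' W W' := by
    ext i j
    simp only [expectConj, of_apply, Matrix.add_apply, Matrix.mul_add, Matrix.add_mul]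
    exact integral_add (integrable_transpose_mul_mul_apply hX W i j)
      (integrable_transpose_mul_mul_apply hX W' i j)
  map_smul' c W := by
    ext i j
    simp only [expectConj, of_apply, Matrix.smul_apply, Matrix.mul_smul, Matrix.smul_mul,
      smul_eq_mul, RingHom.id_apply]
    exact integral_const_mul c _

lemma dotProduct_expectConj_mulVec [Fintype m] {X : Ω → Matrix l m ℝ}
    (hX : ∀ i j, MemLp (fun ω => X ω i j) 2 μ) (W : Matrix l l ℝ) (x : m → ℝ) :
    x ⬝ᵥ expectConj μ X W *ᵥ x = ∫ ω, (X ω *ᵥ x) ⬝ᵥ W *ᵥ (X ω *ᵥ x) ∂μ := by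
  rw [expectConj, dotProduct_of_integral_mulVec (integrable_transpose_mul_mul_apply hX W)]
  simp only [← mulVec_mulVec, dotProduct_mulVec _ _ (W *ᵥ _), vecMul_transpose]

lemma expectConj_posSemidef [Fintype m] {X : Ω → Matrix l m ℝ}
    (hX : ∀ i j, MemLp (fun ω => X ω i j) 2 μ) {W : Matrix l l ℝ} (hW : W.PosSemidef) :
    (expectConj μ X W).PosSemidef :=
  posSemidef_of_integral (integrable_transpose_mul_mul_apply hX W) fun ω => by
    simpa using hW.conjTranspose_mul_mul_same (X ω)

lemma monotone_expectConjₗ [Fintype m] {X : Ω → Matrix l m ℝ}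
    (hX : ∀ i j, MemLp (fun ω => X ω i j) 2 μ) : Monotone (expectConjₗ hX) := fun W W' h => by
  rw [le_iff, ← map_sub]
  exact expectConj_posSemidef hX (le_iff.1 h)

lemma forall_sqrt_integral_sum_sq_le_iff [Fintype m] [DecidableEq l] [DecidableEq m]
    {Y : ℕ → Ω → Matrix l m ℝ} (hY : ∀ k i j, MemLp (fun ω => Y k ω i j) 2 μ) {a lam : ℝ}
    (ha : 0 ≤ a) (hlam : 0 ≤ lam) :
    (∀ (x : m → ℝ) (k : ℕ), √(∫ ω, ∑ i, ((Y k ω).mulVec x i) ^ 2 ∂μ)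
        ≤ a * √(∑ i, x i ^ 2) * lam ^ k) ↔
      ∀ k, expectConj μ (Y k) 1 ≤ (a ^ 2 * lam ^ (2 * k)) • 1 := by
  rw [forall_comm]
  refine forall_congr' fun k => ?_
  rw [(expectConj_posSemidef (hY k) PosSemidef.one).isHermitian.le_smul_one_iff]
  refine forall_congr' fun x => ?_
  rw [sqrt_le_mul_sqrt_mul_pow_iff (by positivity) ha hlam, dotProduct_expectConj_mulVec (hY k)]
  simp only [one_mulVec, dotProduct, sq]

lemma ProbabilityTheory.IdentDistrib.expectConj_eq {Ω' : Type*} [MeasurableSpace Ω']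
    {ν : Measure Ω'} {X : Ω → Matrix l m ℝ} {Y : Ω' → Matrix l m ℝ} (h : IdentDistrib X Y μ ν) :
    expectConj μ X = expectConj ν Y := by
  ext W i j
  have hmeas : Measurable fun M : Matrix l m ℝ => (Mᵀ * W * M) i j := by
    simp only [transpose_mul_mul_apply]; fun_prop
  exact (h.comp hmeas).integral_eq

lemma ProbabilityTheory.IndepFun.expectConj_mul [Fintype m] {o : Type*}
    {X : Ω → Matrix l m ℝ} {Y : Ω → Matrix m o ℝ} (hXY : IndepFun X Y μ)
    (hX : ∀ i j, MemLp (fun ω => X ω i j) 2 μ) (hY : ∀ i j, MemLp (fun ω => Y ω i j) 2 μ)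
    (W : Matrix l l ℝ) :
    expectConj μ (fun ω => X ω * Y ω) W = expectConj μ Y (expectConj μ X W) := by
  ext i j
  have hconj : ∀ ω, (X ω * Y ω)ᵀ * W * (X ω * Y ω) = (Y ω)ᵀ * ((X ω)ᵀ * W * X ω) * Y ω := by
    intro ω; simp only [transpose_mul, Matrix.mul_assoc]
  have hindep : ∀ p q, IndepFun (fun ω => ((X ω)ᵀ * W * X ω) p q)
      (fun ω => Y ω p i * Y ω q j) μ := fun p q =>
    hXY.comp (φ := fun M : Matrix l m ℝ => (Mᵀ * W * M) p q)
      (ψ := fun M : Matrix m o ℝ => M p i * M q j)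
      (by simp only [transpose_mul_mul_apply]; fun_prop) (by fun_prop)
  have hXint := integrable_transpose_mul_mul_apply hX W
  have hYint : ∀ p q, Integrable (fun ω => Y ω p i * Y ω q j) μ :=
    fun p q => (hY p i).integrable_mul (hY q j)
  have hprod : ∀ p q, Integrable
      (fun ω => ((X ω)ᵀ * W * X ω) p q * (Y ω p i * Y ω q j)) μ :=
    fun p q => (hindep p q).integrable_mul (hXint p q) (hYint p q)
  simp only [expectConj, of_apply, hconj, transpose_mul_mul_apply (Y _)]
  rw [integral_finsetSum _ fun p _ => integrable_finsetSum _ fun q _ => hprod p q,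
    integral_finsetSum _ fun p _ => integrable_finsetSum _ fun q _ => (hYint p q).const_mul _]
  refine Finset.sum_congr rfl fun p _ => ?_
  rw [integral_finsetSum _ fun q _ => hprod p q,
    integral_finsetSum _ fun q _ => (hYint p q).const_mul _]
  refine Finset.sum_congr rfl fun q _ => ?_
  rw [(hindep p q).integral_fun_mul_eq_mul_integral (hXint p q).1 (hYint p q).1,
    integral_const_mul]

end ExpectConj

section RandomProduct

variable {Ω ι : Type*} [Fintype ι] [DecidableEq ι] {A Φ : ℕ → Ω → Matrix ι ι ℝ}

lemma measurable_biSup_comap_of_recursion (hΦ0 : ∀ ω, Φ 0 ω = 1)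
    (hΦS : ∀ k ω, Φ (k + 1) ω = A k ω * Φ k ω) (k : ℕ) :
    Measurable[⨆ i ∈ Set.Iio k, MeasurableSpace.comap (A i) inferInstance] (Φ k) := by
  induction k with
  | zero => simp [funext hΦ0]
  | succ k ih =>
    rw [funext (hΦS k)]
    refine Measurable.matrix_mul (comap_measurable (A k) |>.mono ?_ le_rfl)
      (ih.mono (biSup_mono fun i hi => ?_) le_rfl)
    · exact le_biSup (fun i => MeasurableSpace.comap (A i) inferInstance)
        (Set.mem_Iio.2 k.lt_succ_self)
    · exact Set.mem_Iio.2 (Nat.lt_succ_of_lt hi)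

variable [MeasurableSpace Ω] {μ : Measure Ω}

lemma indepFun_of_recursion (hmeas : ∀ k, Measurable (A k)) (hindep : iIndepFun A μ)
    (hΦ0 : ∀ ω, Φ 0 ω = 1) (hΦS : ∀ k ω, Φ (k + 1) ω = A k ω * Φ k ω) (k : ℕ) :
    IndepFun (A k) (Φ k) μ := by
  rw [IndepFun_iff_Indep]
  have h := indep_iSup_of_disjoint (fun i => (hmeas i).comap_le) hindep.iIndep
    (S := {k}) (T := Set.Iio k) (by simp)
  refine indep_of_indep_of_le_right (indep_of_indep_of_le_left h ?_)
    (measurable_biSup_comap_of_recursion hΦ0 hΦS k).comap_le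
  exact le_biSup (fun i => MeasurableSpace.comap (A i) inferInstance) rfl

variable [IsProbabilityMeasure μ] (hA : ∀ k i j, MemLp (fun ω => A k ω i j) 2 μ)
  (hind : ∀ k, IndepFun (A k) (Φ k) μ) (hΦ0 : ∀ ω, Φ 0 ω = 1)
  (hΦS : ∀ k ω, Φ (k + 1) ω = A k ω * Φ k ω)
include hA hind hΦ0 hΦS

lemma memLp_two_apply_of_recursion (k : ℕ) (i j : ι) : MemLp (fun ω => Φ k ω i j) 2 μ := by
  induction k generalizing i j with
  | zero => simpa [hΦ0] using memLp_const _
  | succ k ih =>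
    simp only [hΦS, mul_apply]
    exact memLp_finsetSum _ fun p _ =>
      ((hind k).comp (φ := fun M : Matrix ι ι ℝ => M i p) (ψ := fun M : Matrix ι ι ℝ => M p j)
        (by fun_prop) (by fun_prop)).memLp_two_mul (hA k i p) (ih p j)

lemma expectConj_eq_pow_apply (hid : ∀ k, IdentDistrib (A k) (A 0) μ μ) (k : ℕ)
    (W : Matrix ι ι ℝ) : expectConj μ (Φ k) W = (expectConjₗ (hA 0) ^ k) W := by
  induction k generalizing W with
  | zero => ext i j; simp [expectConj, hΦ0]
  | succ k ih =>
    rw [funext (hΦS k), (hind k).expectConj_mul (hA k)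
      (memLp_two_apply_of_recursion hA hind hΦ0 hΦS k), ih, (hid k).expectConj_eq, pow_succ,
      Module.End.mul_apply]
    rfl

end RandomProduct

/-- For i.i.d. square-integrable random matrices A_k and the recursion x_{k+1} = A_k x_k
(x_k = Φ_k x₀ with Φ_k = A_{k-1}···A₀), exponential second-moment stability holds if and
only if there are a symmetric positive definite P and λ ∈ (0,1) with
λ² P − E[A₀ᵀ P A₀] ⪰ 0. -/
theorem exponential_stability_iff_lyapunov {Ω : Type*} [MeasurableSpace Ω]
    (μ : Measure Ω) [IsProbabilityMeasure μ] {n : ℕ}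
    (A : ℕ → Ω → Matrix (Fin n) (Fin n) ℝ)
    (hmeas : ∀ k, Measurable (A k))
    (hindep : iIndepFun A μ)
    (hident : ∀ k, μ.map (A k) = μ.map (A 0))
    (hL2 : ∀ i j, MemLp (fun ω => A 0 ω i j) 2 μ)
    (Φ : ℕ → Ω → Matrix (Fin n) (Fin n) ℝ)
    (hΦ0 : ∀ ω, Φ 0 ω = 1)
    (hΦS : ∀ k ω, Φ (k + 1) ω = A k ω * Φ k ω) :
    (∃ a > (0 : ℝ), ∃ lam ∈ Set.Ioo (0 : ℝ) 1, ∀ (x0 : Fin n → ℝ) (k : ℕ),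
        Real.sqrt (∫ ω, ∑ i, ((Φ k ω).mulVec x0 i) ^ 2 ∂μ)
          ≤ a * Real.sqrt (∑ i, x0 i ^ 2) * lam ^ k) ↔
    (∃ (P : Matrix (Fin n) (Fin n) ℝ), ∃ lam ∈ Set.Ioo (0 : ℝ) 1, P.PosDef ∧
        (lam ^ 2 • P -
          Matrix.of (fun i j => ∫ ω, ((A 0 ω)ᵀ * P * A 0 ω) i j ∂μ)).PosSemidef) := by
  have hid : ∀ k, IdentDistrib (A k) (A 0) μ μ :=
    fun k => ⟨(hmeas k).aemeasurable, (hmeas 0).aemeasurable, hident k⟩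
  have hA : ∀ k i j, MemLp (fun ω => A k ω i j) 2 μ := fun k i j =>
    ((hid k).symm.comp (u := fun M : Matrix (Fin n) (Fin n) ℝ => M i j) (by fun_prop)).memLp_snd
      (hL2 i j)
  have hind := indepFun_of_recursion hmeas hindep hΦ0 hΦS
  have hΦ := memLp_two_apply_of_recursion hA hind hΦ0 hΦS
  have hΦT := expectConj_eq_pow_apply hA hind hΦ0 hΦS hid
  set T := expectConjₗ (hA 0)
  have hT : Monotone T := monotone_expectConjₗ (hA 0)
  constructor
  · rintro ⟨a, ha, lam, hlam, hstab⟩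
    rw [forall_sqrt_integral_sum_sq_le_iff hΦ ha.le hlam.1.le] at hstab
    obtain ⟨P, hP1, hTP⟩ := hT.exists_le_map_le_smul zero_le_one hlam (by simpa [hΦT] using hstab)
    refine ⟨P, √lam, ⟨Real.sqrt_pos.2 hlam.1, (Real.sqrt_lt' one_pos).2 (by simpa using hlam.2)⟩,
      ?_, ?_⟩
    · simpa using PosDef.one.add_posSemidef (le_iff.1 hP1)
    · rw [Real.sq_sqrt hlam.1.le]; exact hTP
  · rintro ⟨P, lam, hlam, hP, hTP⟩
    obtain ⟨c, hc, hcP⟩ := hP.exists_pos_smul_one_le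
    obtain ⟨C, hC, hPC⟩ := hP.isHermitian.exists_pos_le_smul_one
    refine ⟨√(C / c), by positivity, lam, hlam,
      (forall_sqrt_integral_sum_sq_le_iff hΦ (Real.sqrt_nonneg _) hlam.1.le).2 fun k => ?_⟩
    rw [hΦT, Real.sq_sqrt (by positivity), pow_mul]
    exact hT.pow_apply_le_of_map_le_smul hc (sq_nonneg lam) hcP hPC hTP k
end

section
/- The operator 𝓛(Σ) = E[A_0 Σ A_0^T] on symmetric matrices preserves the positive semidefinite cone, and if there exist P ≻ 0 and λ ∈ (0,1) with 𝓛*(P) := E[A_0^T P A_0] ≤ λ²P, then the spectral radius of 𝓛 is at most λ² < 1. -/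
/-!
Positivity of `𝓛` holds pointwise: `xᵀ A Σ Aᵀ x = (Aᵀx)ᵀ Σ (Aᵀx) ≥ 0`. By duality
`tr (P 𝓛 Σ) = tr (𝓛* P Σ)`, so on the positive semidefinite cone the Lyapunov inequality makes `𝓛`
contract the weighted trace `tr (P Σ)` by `λ²`. A real eigenvector `M` of `𝓛` need not be
symmetric, so it is controlled by some `S ⪰ 0` for which the block matrix `[[S, M], [Mᵀ, S]]` is
positive semidefinite; this is preserved by congruences, hence by `𝓛`. So `𝓛ᵏ S` controls
`cᵏ M`, and `|c|ᵏ |M i j| ≤ (𝓛ᵏ S) i i + (𝓛ᵏ S) j j ≤ C tr (P 𝓛ᵏ S) ≤ C' λ²ᵏ` for all `k`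
forces `|c| ≤ λ²`.
-/

open MeasureTheory Matrix

lemma le_of_forall_mul_pow_le_mul_pow {a C x y : ℝ} (ha : 0 < a) (hy : 0 ≤ y)
    (h : ∀ k : ℕ, a * x ^ k ≤ C * y ^ k) : x ≤ y := by
  by_contra! hxy
  have hx : 0 < x := hy.trans_lt hxy
  have hlim : Filter.Tendsto (fun k : ℕ => C * (y / x) ^ k) Filter.atTop (nhds (C * 0)) :=
    (tendsto_pow_atTop_nhds_zero_of_lt_one (div_nonneg hy hx.le)
      ((div_lt_one hx).mpr hxy)).const_mul C
  refine ha.not_ge (ge_of_tendsto' (by simpa using hlim) fun k => ?_)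
  rw [div_pow, ← mul_div_assoc, le_div_iff₀ (pow_pos hx k)]
  exact h k

namespace Matrix

variable {m n : Type*}

section

variable {T : Module.End ℝ (Matrix m m ℝ)}

lemma posSemidef_pow_apply (hT : ∀ S, S.PosSemidef → (T S).PosSemidef) {S : Matrix m m ℝ}
    (hS : S.PosSemidef) (k : ℕ) : ((T ^ k) S).PosSemidef := by
  induction k with
  | zero => exact hS
  | succ k ih => rw [pow_succ', Module.End.mul_apply]; exact hT _ ih

variable [Fintype m]

lemma PosSemidef.trace_mul_nonneg {D S : Matrix m m ℝ} (hD : D.PosSemidef) (hS : S.PosSemidef) :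
    0 ≤ (D * S).trace := by
  -- `tr (D S)` is the sum of the entries of `D ⊙ S`, which is positive semidefinite (Schur).
  have hDS := (hD.hadamard hS).dotProduct_mulVec_nonneg (fun _ => 1)
  rw [← hS.isHermitian.eq, conjTranspose_eq_transpose_of_trivial, ← sum_hadamard_eq]
  simpa [dotProduct, mulVec] using hDS

/-- `S` dominates `N` when the block matrix `!![S, N; Nᵀ, S]` is positive semidefinite
(as a quadratic form). -/
def Dominates (S N : Matrix m m ℝ) : Prop :=
  ∀ v w : m → ℝ, 2 * |v ⬝ᵥ N *ᵥ w| ≤ v ⬝ᵥ S *ᵥ v + w ⬝ᵥ S *ᵥ w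

lemma Dominates.mul_mul_transpose [Fintype n] {S N : Matrix m m ℝ}
    (h : Dominates S N) (B : Matrix n m ℝ) : Dominates (B * S * Bᵀ) (B * N * Bᵀ) := by
  have hconj : ∀ (X : Matrix m m ℝ) (u u' : n → ℝ),
      u ⬝ᵥ (B * X * Bᵀ) *ᵥ u' = (Bᵀ *ᵥ u) ⬝ᵥ X *ᵥ (Bᵀ *ᵥ u') := fun X u u' => by
    rw [← mulVec_mulVec, ← mulVec_mulVec, dotProduct_mulVec u B, ← mulVec_transpose]
  intro v w
  simpa only [hconj] using h _ _

lemma dominates_pow_apply (hT : ∀ S N, Dominates S N → Dominates (T S) (T N))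
    {S N : Matrix m m ℝ} (h : Dominates S N) (k : ℕ) : Dominates ((T ^ k) S) ((T ^ k) N) := by
  induction k with
  | zero => exact h
  | succ k ih => rw [pow_succ', Module.End.mul_apply, Module.End.mul_apply]; exact hT _ _ ih

lemma trace_mul_pow_apply_le {P : Matrix m m ℝ} {ρ : ℝ} (hρ : 0 ≤ ρ)
    (hT : ∀ S, S.PosSemidef → (T S).PosSemidef)
    (hTP : ∀ S, S.PosSemidef → (P * T S).trace ≤ ρ * (P * S).trace)
    {S : Matrix m m ℝ} (hS : S.PosSemidef) (k : ℕ) :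
    (P * (T ^ k) S).trace ≤ ρ ^ k * (P * S).trace := by
  induction k with
  | zero => simp
  | succ k ih =>
    rw [pow_succ', Module.End.mul_apply, pow_succ', mul_assoc]
    exact (hTP _ (posSemidef_pow_apply hT hS k)).trans (mul_le_mul_of_nonneg_left ih hρ)

variable [DecidableEq m]

lemma Dominates.two_mul_abs_apply_le {S N : Matrix m m ℝ} (h : Dominates S N) (i j : m) :
    2 * |N i j| ≤ S i i + S j j := by
  simpa using h (Pi.single i 1) (Pi.single j 1)

lemma dominates_sum_abs_smul_one (N : Matrix m m ℝ) :
    Dominates ((∑ i, ∑ j, |N i j|) • 1) N := by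
  intro v w
  have hsq : ∀ (u : m → ℝ) i, u i ^ 2 ≤ u ⬝ᵥ u := fun u i => by
    simpa [dotProduct, sq] using Finset.single_le_sum (fun k _ => mul_self_nonneg (u k))
      (Finset.mem_univ i)
  have hexp : v ⬝ᵥ N *ᵥ w = ∑ i, ∑ j, N i j * (v i * w j) := by
    simp only [dotProduct, mulVec, Finset.mul_sum]
    exact Finset.sum_congr rfl fun i _ => Finset.sum_congr rfl fun j _ => by ring
  calc 2 * |v ⬝ᵥ N *ᵥ w| ≤ 2 * ∑ i, ∑ j, |N i j * (v i * w j)| := by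
        rw [hexp]
        gcongr
        exact (Finset.abs_sum_le_sum_abs _ _).trans
          (Finset.sum_le_sum fun i _ => Finset.abs_sum_le_sum_abs _ _)
    _ ≤ 2 * ∑ i, ∑ j, |N i j| * ((v ⬝ᵥ v + w ⬝ᵥ w) / 2) := by
        gcongr with i _ j _
        rw [abs_mul, abs_mul]
        gcongr
        nlinarith [two_mul_le_add_sq |v i| |w j|, sq_abs (v i), sq_abs (w j), hsq v i, hsq w j]
    _ = (∑ i, ∑ j, |N i j|) * (v ⬝ᵥ v + w ⬝ᵥ w) := by
        simp only [Finset.mul_sum, Finset.sum_mul]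
        exact Finset.sum_congr rfl fun i _ => Finset.sum_congr rfl fun j _ => by ring
    _ = _ := by simp only [smul_mulVec, one_mulVec, dotProduct_smul, smul_eq_mul]; ring

lemma PosDef.posSemidef_inv_apply_smul_sub_single {P : Matrix m m ℝ} (hP : P.PosDef) (i : m) :
    (P⁻¹ i i • P - single i i 1).PosSemidef := by
  refine .of_dotProduct_mulVec_nonneg
    ((hP.isHermitian.smul (.all _)).sub (by simp [IsHermitian])) fun v => ?_
  have hPt : Pᵀ = P := hP.isHermitian.eq
  set u := P⁻¹ *ᵥ Pi.single i 1
  have hPu : P *ᵥ u = Pi.single i 1 := by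
    rw [mulVec_mulVec, mul_nonsing_inv _ (P.isUnit_iff_isUnit_det.mp hP.isUnit), one_mulVec]
  -- Cauchy–Schwarz for the form of `P`, applied to `v` and `u = P⁻¹ eᵢ`.
  have hcs := (toBilin' P).apply_mul_apply_le_of_forall_zero_le
    (fun x => by simpa [toBilin'_apply'] using hP.posSemidef.dotProduct_mulVec_nonneg x) v u
  simp only [toBilin'_apply', dotProduct_mulVec u, ← mulVec_transpose, hPt, hPu] at hcs
  simp only [star_trivial, sub_mulVec, smul_mulVec, dotProduct_sub, dotProduct_smul,
    single_mulVec_eq, smul_eq_mul, sub_nonneg]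
  simpa [u, mul_comm] using hcs

lemma PosDef.apply_le_inv_apply_mul_trace {P X : Matrix m m ℝ} (hP : P.PosDef)
    (hX : X.PosSemidef) (i : m) : X i i ≤ P⁻¹ i i * (P * X).trace := by
  have h := (hP.posSemidef_inv_apply_smul_sub_single i).trace_mul_nonneg hX
  rwa [sub_mul, trace_sub, smul_mul, trace_smul, trace_single_mul, one_smul, sub_nonneg] at h

theorem abs_le_of_mem_spectrum_of_trace_mul_le {P : Matrix m m ℝ} {ρ : ℝ} (hP : P.PosDef)
    (hρ : 0 ≤ ρ) (hT_psd : ∀ S, S.PosSemidef → (T S).PosSemidef)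
    (hT_dom : ∀ S N, Dominates S N → Dominates (T S) (T N))
    (hTP : ∀ S, S.PosSemidef → (P * T S).trace ≤ ρ * (P * S).trace)
    {c : ℝ} (hc : c ∈ spectrum ℝ T) : |c| ≤ ρ := by
  obtain ⟨M, hM⟩ := (Module.End.hasEigenvalue_iff_mem_spectrum.mpr hc).exists_hasEigenvector
  obtain ⟨i, j, hMij⟩ : ∃ i j, M i j ≠ 0 := by
    by_contra! h
    exact hM.2 (ext h)
  set S := (∑ i, ∑ j, |M i j|) • (1 : Matrix m m ℝ)
  have hS : S.PosSemidef := PosSemidef.one.smul (by positivity)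
  refine le_of_forall_mul_pow_le_mul_pow (a := 2 * |M i j|)
    (C := (P⁻¹ i i + P⁻¹ j j) * (P * S).trace) (by positivity) hρ fun k => ?_
  have hdom :=
    (dominates_pow_apply hT_dom (dominates_sum_abs_smul_one M) k).two_mul_abs_apply_le i j
  rw [hM.pow_apply, smul_apply, smul_eq_mul, abs_mul, abs_pow] at hdom
  have hSk := posSemidef_pow_apply hT_psd hS k
  calc 2 * |M i j| * |c| ^ k ≤ ((T ^ k) S) i i + ((T ^ k) S) j j := by linarith
    _ ≤ (P⁻¹ i i + P⁻¹ j j) * (P * (T ^ k) S).trace := by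
        rw [add_mul]
        exact add_le_add (hP.apply_le_inv_apply_mul_trace hSk i)
          (hP.apply_le_inv_apply_mul_trace hSk j)
    _ ≤ (P⁻¹ i i + P⁻¹ j j) * (ρ ^ k * (P * S).trace) := by
        have := hP.posSemidef.inv
        gcongr
        · exact add_nonneg this.diag_nonneg this.diag_nonneg
        · exact trace_mul_pow_apply_le hρ hT_psd hTP hS k
    _ = (P⁻¹ i i + P⁻¹ j j) * (P * S).trace * ρ ^ k := by ring

end

section

variable {Ω : Type*} [MeasurableSpace Ω] {μ : Measure Ω} [Fintype m] [Fintype n]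

lemma linearMap_apply_eq_sum [DecidableEq m] [DecidableEq n]
    (ℓ : Matrix m n ℝ →ₗ[ℝ] ℝ) (X : Matrix m n ℝ) :
    ℓ X = ∑ i, ∑ j, X i j * ℓ (single i j 1) := by
  conv_lhs => rw [matrix_eq_sum_single X]
  simp only [map_sum]
  refine Finset.sum_congr rfl fun i _ => Finset.sum_congr rfl fun j _ => ?_
  rw [← smul_eq_mul, ← map_smul, smul_single, smul_eq_mul, mul_one]

section

variable {F : Ω → Matrix m n ℝ}

lemma integrable_linearMap_apply (ℓ : Matrix m n ℝ →ₗ[ℝ] ℝ)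
    (hF : ∀ i j, Integrable (fun ω => F ω i j) μ) : Integrable (fun ω => ℓ (F ω)) μ := by
  classical
  simp only [linearMap_apply_eq_sum ℓ (F _)]
  exact integrable_finsetSum _ fun i _ => integrable_finsetSum _ fun j _ => (hF i j).mul_const _

lemma linearMap_integral (ℓ : Matrix m n ℝ →ₗ[ℝ] ℝ)
    (hF : ∀ i j, Integrable (fun ω => F ω i j) μ) :
    ℓ (of fun i j => ∫ ω, F ω i j ∂μ) = ∫ ω, ℓ (F ω) ∂μ := by
  classical
  simp only [linearMap_apply_eq_sum ℓ (F _), linearMap_apply_eq_sum ℓ (of _), of_apply]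
  rw [integral_finsetSum _ fun i _ => integrable_finsetSum _ fun j _ => (hF i j).mul_const _]
  refine Finset.sum_congr rfl fun i _ => ?_
  rw [integral_finsetSum _ fun j _ => (hF i j).mul_const _]
  simp only [integral_mul_const]

lemma integrable_dotProduct_mulVec (hF : ∀ i j, Integrable (fun ω => F ω i j) μ)
    (v : m → ℝ) (w : n → ℝ) : Integrable (fun ω => v ⬝ᵥ F ω *ᵥ w) μ := by
  classical
  simpa [toLinearMap₂'_apply'] using
    integrable_linearMap_apply (((toLinearMap₂' ℝ).toLinearMap.flip v).flip w) hF

lemma dotProduct_integral_mulVec (hF : ∀ i j, Integrable (fun ω => F ω i j) μ)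
    (v : m → ℝ) (w : n → ℝ) :
    v ⬝ᵥ (of fun i j => ∫ ω, F ω i j ∂μ) *ᵥ w = ∫ ω, v ⬝ᵥ F ω *ᵥ w ∂μ := by
  classical
  simpa [toLinearMap₂'_apply'] using
    linearMap_integral (((toLinearMap₂' ℝ).toLinearMap.flip v).flip w) hF

end

lemma integrable_mul_mul_apply {l : Type*} {F : Ω → Matrix l m ℝ} {G : Ω → Matrix n l ℝ}
    (hF : ∀ i j, MemLp (fun ω => F ω i j) 2 μ) (hG : ∀ i j, MemLp (fun ω => G ω i j) 2 μ)
    (C : Matrix m n ℝ) (i j : l) : Integrable (fun ω => (F ω * C * G ω) i j) μ := by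
  simp only [mul_apply, Finset.sum_mul]
  exact integrable_finsetSum _ fun b _ => integrable_finsetSum _ fun a _ => by
    simpa [mul_comm, mul_left_comm] using ((hF i a).integrable_mul (hG b j)).const_mul (C a b)

lemma trace_mul_integral {F : Ω → Matrix m m ℝ} (hF : ∀ i j, Integrable (fun ω => F ω i j) μ)
    (C : Matrix m m ℝ) :
    (C * of fun i j => ∫ ω, F ω i j ∂μ).trace = ∫ ω, (C * F ω).trace ∂μ := by
  classical
  simpa using linearMap_integral (traceLinearMap m ℝ ℝ ∘ₗ LinearMap.mulLeft ℝ C) hF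

lemma posSemidef_integral {F : Ω → Matrix m m ℝ} (hF : ∀ i j, Integrable (fun ω => F ω i j) μ)
    (h : ∀ ω, (F ω).PosSemidef) : (of fun i j => ∫ ω, F ω i j ∂μ).PosSemidef := by
  refine .of_dotProduct_mulVec_nonneg ?_ fun v => ?_
  · ext i j
    simp only [conjTranspose_apply, star_trivial, of_apply]
    exact integral_congr_ae (.of_forall fun ω => (h ω).isHermitian.apply i j)
  · rw [star_trivial, dotProduct_integral_mulVec hF]
    exact integral_nonneg fun ω => by simpa using (h ω).dotProduct_mulVec_nonneg v

lemma dominates_integral {F G : Ω → Matrix m m ℝ} (hF : ∀ i j, Integrable (fun ω => F ω i j) μ)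
    (hG : ∀ i j, Integrable (fun ω => G ω i j) μ) (h : ∀ ω, Dominates (F ω) (G ω)) :
    Dominates (of fun i j => ∫ ω, F ω i j ∂μ) (of fun i j => ∫ ω, G ω i j ∂μ) := by
  intro v w
  simp only [dotProduct_integral_mulVec hF, dotProduct_integral_mulVec hG]
  calc 2 * |∫ ω, v ⬝ᵥ G ω *ᵥ w ∂μ| ≤ ∫ ω, 2 * |v ⬝ᵥ G ω *ᵥ w| ∂μ := by
        rw [integral_const_mul]
        gcongr
        exact abs_integral_le_integral_abs
    _ ≤ ∫ ω, (v ⬝ᵥ F ω *ᵥ v + w ⬝ᵥ F ω *ᵥ w) ∂μ :=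
        integral_mono ((integrable_dotProduct_mulVec hG v w).abs.const_mul 2)
          ((integrable_dotProduct_mulVec hF v v).add (integrable_dotProduct_mulVec hF w w))
          fun ω => h ω v w
    _ = _ :=
        integral_add (integrable_dotProduct_mulVec hF v v) (integrable_dotProduct_mulVec hF w w)

lemma trace_mul_integral_mul_mul_transpose {A : Ω → Matrix m m ℝ}
    (hA : ∀ i j, MemLp (fun ω => A ω i j) 2 μ) (P S : Matrix m m ℝ) :
    (P * of fun i j => ∫ ω, (A ω * S * (A ω)ᵀ) i j ∂μ).trace =
      ((of fun i j => ∫ ω, ((A ω)ᵀ * P * A ω) i j ∂μ) * S).trace := by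
  have hAt : ∀ i j, MemLp (fun ω => (A ω)ᵀ i j) 2 μ := fun i j => hA j i
  rw [trace_mul_comm _ S, trace_mul_integral (integrable_mul_mul_apply hA hAt S),
    trace_mul_integral (integrable_mul_mul_apply hAt hA P)]
  refine integral_congr_ae (.of_forall fun ω => ?_)
  simp only [← mul_assoc]
  rw [trace_mul_cycle, trace_mul_cycle]
  simp only [mul_assoc]

end

end Matrix

theorem second_moment_operator_spectral_radius_general {Ω : Type*} [MeasurableSpace Ω]
    (μ : Measure Ω) {n : ℕ}
    (A : Ω → Matrix (Fin n) (Fin n) ℝ)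
    (hL2 : ∀ i j, MemLp (fun ω => A ω i j) 2 μ)
    (T : Matrix (Fin n) (Fin n) ℝ →ₗ[ℝ] Matrix (Fin n) (Fin n) ℝ)
    (hT : ∀ S : Matrix (Fin n) (Fin n) ℝ,
      T S = Matrix.of fun i j => ∫ ω, (A ω * S * (A ω)ᵀ) i j ∂μ) :
    (∀ S : Matrix (Fin n) (Fin n) ℝ, S.PosSemidef → (T S).PosSemidef) ∧
    (∀ (P : Matrix (Fin n) (Fin n) ℝ) (lam : ℝ), P.PosDef → lam ∈ Set.Ioo (0 : ℝ) 1 →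
      (lam ^ 2 • P -
        Matrix.of (fun i j => ∫ ω, ((A ω)ᵀ * P * A ω) i j ∂μ)).PosSemidef →
      ∀ c ∈ spectrum ℝ (T : Module.End ℝ (Matrix (Fin n) (Fin n) ℝ)),
        |c| ≤ lam ^ 2) := by
  have hintegrable : ∀ (S : Matrix (Fin n) (Fin n) ℝ) i j,
      Integrable (fun ω => (A ω * S * (A ω)ᵀ) i j) μ :=
    integrable_mul_mul_apply hL2 fun i j => hL2 j i
  have hT_psd : ∀ S : Matrix (Fin n) (Fin n) ℝ, S.PosSemidef → (T S).PosSemidef := fun S hS => by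
    rw [hT]
    exact posSemidef_integral (hintegrable S) fun ω => by
      simpa using hS.mul_mul_conjTranspose_same (A ω)
  refine ⟨hT_psd, fun P lam hP _ hLyap c hc => ?_⟩
  refine abs_le_of_mem_spectrum_of_trace_mul_le hP (sq_nonneg lam) hT_psd
    (fun S N h => ?_) (fun S hS => ?_) hc
  · rw [hT, hT]
    exact dominates_integral (hintegrable S) (hintegrable N) fun ω => h.mul_mul_transpose (A ω)
  · have hgap := hLyap.trace_mul_nonneg hS
    rw [sub_mul, trace_sub, smul_mul, trace_smul, smul_eq_mul, sub_nonneg,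
      ← trace_mul_integral_mul_mul_transpose hL2] at hgap
    rwa [hT]

/-- The operator 𝓛(Σ) = E[A₀ Σ A₀ᵀ] preserves the positive semidefinite cone, and if
there are P ≻ 0 and λ ∈ (0,1) with 𝓛*(P) = E[A₀ᵀ P A₀] ⪯ λ²P, then every (real) spectral
value of 𝓛 has absolute value at most λ² < 1, i.e. the spectral radius of 𝓛 is ≤ λ². -/
theorem second_moment_operator_spectral_radius {Ω : Type*} [MeasurableSpace Ω]
    (μ : Measure Ω) [IsProbabilityMeasure μ] {n : ℕ}
    (A : Ω → Matrix (Fin n) (Fin n) ℝ)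
    (hmeas : Measurable A)
    (hL2 : ∀ i j, MemLp (fun ω => A ω i j) 2 μ)
    (T : Matrix (Fin n) (Fin n) ℝ →ₗ[ℝ] Matrix (Fin n) (Fin n) ℝ)
    (hT : ∀ S : Matrix (Fin n) (Fin n) ℝ,
      T S = Matrix.of fun i j => ∫ ω, (A ω * S * (A ω)ᵀ) i j ∂μ) :
    (∀ S : Matrix (Fin n) (Fin n) ℝ, S.PosSemidef → (T S).PosSemidef) ∧
    (∀ (P : Matrix (Fin n) (Fin n) ℝ) (lam : ℝ), P.PosDef → lam ∈ Set.Ioo (0 : ℝ) 1 →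
      (lam ^ 2 • P -
        Matrix.of (fun i j => ∫ ω, ((A ω)ᵀ * P * A ω) i j ∂μ)).PosSemidef →
      ∀ c ∈ spectrum ℝ (T : Module.End ℝ (Matrix (Fin n) (Fin n) ℝ)),
        |c| ≤ lam ^ 2) :=
  second_moment_operator_spectral_radius_general μ A hL2 T hT
end
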